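/- arXiv:1803.09154 — 6 statements merged into one kernel-verified Lean document; each statement's English description precedes it below -/
import Mathlib

section
/- If ⊥ is a regular orthogonality relation on a set X, then for each subset A ⊆ X and each point x ∉ A with {x} ⊥ A, there are subsets C, D of X such that x ∈ C^⊥, A ⊆ D^⊥, and C^⊥ ∩ D^⊥ = ∅. -/
/-- `A^⊥` for an orthogonality relation. -/
def orthCompl {X : Type*} (perp : Set X → Set X → Prop) (A : Set X) : Set X :=
  {x : X | x ∉ A ∧ perp {x} A}

/-- `C` and `D` `⊥`-span `X`. -/
def perpSpan {X : Type*} (perp : Set X → Set X → Prop) (C D : Set X) : Prop :=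
  perp C D ∧ ∃ C' D' : Set X, C' ∪ D' = Set.univ ∧ perp C' D ∧ perp D' C

theorem stmt_5 {X : Type*} (perp : Set X → Set X → Prop)
    (hsymm : ∀ A B : Set X, perp A B → perp B A)
    (hzero : perp ∅ Set.univ)
    (hunion : ∀ A C C' : Set X, perp A (C ∪ C') ↔ (perp A C ∧ perp A C'))
    (hFrechet : ∀ x y : X, x ≠ y → perp {x} {y})
    (hreg : ∀ (x : X) (A : Set X), perp {x} A → perpSpan perp {x} A)
    (hbd : ∀ x : X, perp {x} {x} → perp {x} Set.univ)
    (A : Set X) (x : X) (hx : x ∉ A) (hperp : perp {x} A) :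
    ∃ C D : Set X, x ∈ orthCompl perp C ∧ A ⊆ orthCompl perp D ∧
      orthCompl perp C ∩ orthCompl perp D = ∅ := by
  -- downward closure in the second argument
  have hmono : ∀ S T U : Set X, perp S T → U ⊆ T → perp S U := by
    intro S T U h hUT
    have : perp S (U ∪ (T \ U)) := by rwa [Set.union_diff_cancel hUT]
    exact ((hunion S U (T \ U)).mp this).1
  obtain ⟨-, C', D', hcover, hC'A, hD'x⟩ := hreg x A hperp
  refine ⟨(D' \ {x}) ∪ A, (C' \ A) ∪ {x}, ?_, ?_, ?_⟩
  · refine ⟨?_, (hunion _ _ _).mpr ⟨?_, hperp⟩⟩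
    · rintro (⟨-, hxx⟩ | hxA)
      · exact hxx rfl
      · exact hx hxA
    · exact hmono _ _ _ (hsymm _ _ hD'x) Set.diff_subset
  · intro a ha
    refine ⟨?_, (hunion _ _ _).mpr ⟨?_, ?_⟩⟩
    · rintro (⟨-, haA⟩ | hax)
      · exact haA ha
      · exact hx (hax ▸ ha)
    · have h1 : perp C' {a} := hmono _ _ _ hC'A (Set.singleton_subset_iff.mpr ha)
      exact hmono _ _ _ (hsymm _ _ h1) Set.diff_subset
    · exact hsymm _ _ (hmono _ _ _ hperp (Set.singleton_subset_iff.mpr ha))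
  · ext y
    simp only [Set.mem_inter_iff, Set.mem_empty_iff_false, iff_false, not_and]
    rintro ⟨hyC, -⟩ ⟨hyD, -⟩
    have hy : y ∈ C' ∪ D' := hcover ▸ Set.mem_univ y
    rcases hy with hy | hy
    · exact hyC (Or.inr (by_contra fun hyA =>
        hyD (Or.inl ⟨hy, hyA⟩)))
    · refine hyD (Or.inr ?_)
      by_contra hne
      exact hyC (Or.inl ⟨hy, hne⟩)
end

section
/- The functional orthogonality relation on a topological space X is normal if and only if X is functionally Hausdorff (i.e., distinct points are separated by continuous real-valued functions). -/
/-- The functional orthogonality relation on a topological space. -/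
def funcPerp (X : Type*) [TopologicalSpace X] (C D : Set X) : Prop :=
  ∃ f : X → ℝ, Continuous f ∧ (∀ x, f x ∈ Set.Icc (0 : ℝ) 1) ∧
    (∀ x ∈ C, f x = 0) ∧ (∀ x ∈ D, f x = 1)

theorem stmt_7 (X : Type*) [TopologicalSpace X] :
    ((∀ x y : X, x ≠ y → funcPerp X {x} {y}) ∧
     (∀ C D : Set X, funcPerp X C D →
        ∃ C' D' : Set X, C' ∪ D' = Set.univ ∧ funcPerp X C' D ∧ funcPerp X D' C) ∧
     (∀ B : Set X, funcPerp X B B → funcPerp X B Set.univ))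
    ↔
    (∀ x y : X, x ≠ y → ∃ f : X → ℝ, Continuous f ∧
        (∀ z, f z ∈ Set.Icc (0 : ℝ) 1) ∧ f x = 0 ∧ f y = 1) := by
  constructor
  · rintro ⟨h1, -, -⟩ x y hxy
    obtain ⟨f, hf, hr, h0, h1'⟩ := h1 x y hxy
    exact ⟨f, hf, hr, h0 x rfl, h1' y rfl⟩
  · intro hF
    refine ⟨fun x y hxy => ?_, fun C D hCD => ?_, fun B hBB => ?_⟩
    · obtain ⟨f, hf, hr, h0, h1⟩ := hF x y hxy
      exact ⟨f, hf, hr, fun z hz => hz ▸ h0, fun z hz => hz ▸ h1⟩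
    · obtain ⟨f, hf, hr, h0, h1⟩ := hCD
      refine ⟨f ⁻¹' Set.Iic (1/2), f ⁻¹' Set.Ici (1/2), ?_, ?_, ?_⟩
      · ext z; simp only [Set.mem_union, Set.mem_preimage, Set.mem_Iic, Set.mem_Ici,
          Set.mem_univ, iff_true]
        exact le_or_gt (f z) (1/2) |>.imp id le_of_lt
      · refine ⟨fun z => max 0 (2 * f z - 1),
          continuous_const.max (by fun_prop), fun z => ?_, fun z hz => ?_, fun z hz => ?_⟩
        · have := (hr z).2
          constructor
          · exact le_max_left _ _
          · simp only [max_le_iff]; constructor <;> linarith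
        · have : f z ≤ 1/2 := hz
          simp only [max_eq_left_iff]; linarith
        · have hz1 := h1 z hz
          simp only [hz1]; norm_num
      · refine ⟨fun z => max 0 (1 - 2 * f z),
          continuous_const.max (by fun_prop), fun z => ?_, fun z hz => ?_, fun z hz => ?_⟩
        · have := (hr z).1
          constructor
          · exact le_max_left _ _
          · simp only [max_le_iff]; constructor <;> linarith
        · have : (1:ℝ)/2 ≤ f z := hz
          simp only [max_eq_left_iff]; linarith
        · have hz0 := h0 z hz
          simp only [hz0]; norm_num
    · obtain ⟨f, hf, hr, h0, h1⟩ := hBB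
      have hB : B = ∅ := by
        ext z; simp only [Set.mem_empty_iff_false, iff_false]
        intro hz
        have := h0 z hz; have := h1 z hz
        linarith
      exact ⟨fun _ => 1, continuous_const, fun z => by norm_num,
        fun z hz => by simp [hB] at hz, fun z _ => rfl⟩
end

section
/- If ⊥ is a normal orthogonality relation on a set X and C ⊥ D with C ∩ D = ∅, then there exist subsets E and F of X such that C ⊆ E^⊥, D ⊆ F^⊥, and E^⊥ ⊥ F^⊥. -/
theorem stmt_8 {X : Type*} (perp : Set X → Set X → Prop)
    (hsymm : ∀ A B : Set X, perp A B → perp B A)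
    (hzero : perp ∅ Set.univ)
    (hunion : ∀ A C C' : Set X, perp A (C ∪ C') ↔ (perp A C ∧ perp A C'))
    (hFrechet : ∀ x y : X, x ≠ y → perp {x} {y})
    (hnormal : ∀ C D : Set X, perp C D →
        ∃ C' D' : Set X, C' ∪ D' = Set.univ ∧ perp C' D ∧ perp D' C)
    (hbd : ∀ B : Set X, perp B B → perp B Set.univ)
    (C D : Set X) (hCD : perp C D) (hdisj : C ∩ D = ∅) :
    ∃ E F : Set X, C ⊆ orthCompl perp E ∧ D ⊆ orthCompl perp F ∧
      perp (orthCompl perp E) (orthCompl perp F) := by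
  -- monotonicity in the second argument
  have mono : ∀ A B B' : Set X, perp A B → B' ⊆ B → perp A B' := by
    intro A B B' h hsub
    have he : B' ∪ B = B := Set.union_eq_self_of_subset_left hsub
    exact ((hunion A B' B).mp (by rwa [he])).1
  obtain ⟨C1, D1, hcov1, hC1D, hD1C⟩ := hnormal C D hCD
  have hCC1D : perp (C ∪ C1) D :=
    hsymm _ _ ((hunion D C C1).mpr ⟨hsymm _ _ hCD, hsymm _ _ hC1D⟩)
  obtain ⟨A, B, hcov2, hAD, hBCC1⟩ := hnormal (C ∪ C1) D hCC1D
  refine ⟨D1 \ C, A \ D, ?_, ?_, ?_⟩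
  · intro x hx
    refine ⟨fun h => h.2 hx, ?_⟩
    have h1 : perp D1 {x} := mono _ _ _ hD1C (Set.singleton_subset_iff.mpr hx)
    exact mono _ _ _ (hsymm _ _ h1) Set.diff_subset
  · intro x hx
    refine ⟨fun h => h.2 hx, ?_⟩
    have h1 : perp A {x} := mono _ _ _ hAD (Set.singleton_subset_iff.mpr hx)
    exact mono _ _ _ (hsymm _ _ h1) Set.diff_subset
  · have hsub1 : orthCompl perp (D1 \ C) ⊆ C ∪ C1 := by
      intro x hx
      by_cases hxC : x ∈ C
      · exact Or.inl hxC
      · have hxD1 : x ∉ D1 := fun h => hx.1 ⟨h, hxC⟩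
        have : x ∈ C1 ∪ D1 := hcov1 ▸ Set.mem_univ x
        exact Or.inr (this.resolve_right hxD1)
    have hsub2 : orthCompl perp (A \ D) ⊆ D ∪ B := by
      intro x hx
      by_cases hxD : x ∈ D
      · exact Or.inl hxD
      · have hxA : x ∉ A := fun h => hx.1 ⟨h, hxD⟩
        have : x ∈ A ∪ B := hcov2 ▸ Set.mem_univ x
        exact Or.inr (this.resolve_left hxA)
    have hST : perp (C ∪ C1) (D ∪ B) :=
      (hunion _ D B).mpr ⟨hCC1D, hsymm _ _ hBCC1⟩
    have h1 : perp (C ∪ C1) (orthCompl perp (A \ D)) := mono _ _ _ hST hsub2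
    exact hsymm _ _ (mono _ _ _ (hsymm _ _ h1) hsub1)
end

section
/- If λ is an asymptotic resemblance relation on subsets of X such that {x} λ {y} for all x, y ∈ X, then the relation ⊥ defined by: A ⊥ C iff every set B with B ≤ A and B ≤ C is bounded (where B ≤ A means A λ (A ∪ B), and B is bounded if B ≤ D for every nonempty D ⊆ X), is an orthogonality relation on X. -/
theorem stmt_10 {X : Type*} (lam : Set X → Set X → Prop)
    (hequiv : Equivalence lam)
    (hax1 : ∀ A₁ B₁ A₂ B₂ : Set X, lam A₁ B₁ → lam A₂ B₂ → lam (A₁ ∪ A₂) (B₁ ∪ B₂))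
    (hax2 : ∀ A B₁ B₂ : Set X, lam A (B₁ ∪ B₂) → B₁.Nonempty → B₂.Nonempty →
        ∃ A₁ A₂ : Set X, A₁.Nonempty ∧ A₂.Nonempty ∧ A = A₁ ∪ A₂ ∧ lam A₁ B₁ ∧ lam A₂ B₂)
    (hpts : ∀ x y : X, lam {x} {y}) :
    -- `le B A` means `B ≤ A`, i.e. `A λ (A ∪ B)`;
    -- `bounded B` means `B ≤ D` for every nonempty `D`;
    -- `perp A C` means every `B` with `B ≤ A` and `B ≤ C` is bounded.
    (∀ A C : Set X,
        (∀ B : Set X, lam A (A ∪ B) → lam C (C ∪ B) →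
            ∀ D : Set X, D.Nonempty → lam D (D ∪ B)) →
        (∀ B : Set X, lam C (C ∪ B) → lam A (A ∪ B) →
            ∀ D : Set X, D.Nonempty → lam D (D ∪ B))) ∧
    (∀ B : Set X, lam (∅ : Set X) (∅ ∪ B) → lam Set.univ (Set.univ ∪ B) →
        ∀ D : Set X, D.Nonempty → lam D (D ∪ B)) ∧
    (∀ A C C' : Set X,
        ((∀ B : Set X, lam A (A ∪ B) → lam (C ∪ C') ((C ∪ C') ∪ B) →
            ∀ D : Set X, D.Nonempty → lam D (D ∪ B)) ↔
          ((∀ B : Set X, lam A (A ∪ B) → lam C (C ∪ B) →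
              ∀ D : Set X, D.Nonempty → lam D (D ∪ B)) ∧
           (∀ B : Set X, lam A (A ∪ B) → lam C' (C' ∪ B) →
              ∀ D : Set X, D.Nonempty → lam D (D ∪ B))))) := by
  obtain ⟨hrefl, hsymm, htrans⟩ := hequiv
  -- transfer : B ≤ E and E λ F implies B ≤ F
  have transfer : ∀ E F B : Set X, lam E (E ∪ B) → lam E F → lam F (F ∪ B) := by
    intro E F B h1 h2
    have h3 : lam F (E ∪ B) := htrans (hsymm h2) h1
    have h4 : lam (E ∪ B) (F ∪ B) := hax1 E F B B h2 (hrefl B)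
    exact htrans h3 h4
  -- monotonicity : B₁ ⊆ B₂ and B₂ ≤ A implies B₁ ≤ A
  have mono : ∀ A B₁ B₂ : Set X, B₁ ⊆ B₂ → lam A (A ∪ B₂) → lam A (A ∪ B₁) := by
    intro A B₁ B₂ hsub h
    rcases B₁.eq_empty_or_nonempty with rfl | hne
    · simpa using hrefl A
    have hB₂ : B₂.Nonempty := hne.mono hsub
    have hdecomp : A ∪ B₂ = (A ∪ B₁) ∪ B₂ := by
      rw [Set.union_assoc, Set.union_eq_self_of_subset_left hsub]
    rw [hdecomp] at h
    obtain ⟨A₁, A₂, -, -, hA, h1, h2⟩ :=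
      hax2 A (A ∪ B₁) B₂ h (hne.mono Set.subset_union_right) hB₂
    have : lam (A₁ ∪ A₂) ((A ∪ B₁) ∪ A₂) := hax1 A₁ (A ∪ B₁) A₂ A₂ h1 (hrefl A₂)
    rw [← hA] at this
    have heq : (A ∪ B₁) ∪ A₂ = A ∪ B₁ := by
      apply Set.union_eq_self_of_subset_right
      exact subset_trans (by rw [hA]; exact Set.subset_union_right) Set.subset_union_left
    rwa [heq] at this
  refine ⟨?_, ?_, ?_⟩
  · intro A C h B h1 h2 D hD
    exact h B h2 h1 D hD
  · intro B h1 _ D hD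
    rw [Set.empty_union] at h1
    rcases B.eq_empty_or_nonempty with rfl | hne
    · simpa using hrefl D
    · obtain ⟨A₁, A₂, hA₁, -, hA, -⟩ := hax2 ∅ B B (by rwa [Set.union_self]) hne hne
      exfalso
      have : A₁ ⊆ (∅ : Set X) := by rw [hA]; exact Set.subset_union_left
      obtain ⟨x, hx⟩ := hA₁
      exact (this hx)
  · intro A C C'
    constructor
    · intro h
      constructor
      · intro B h1 h2 D hD
        apply h B h1 _ D hD
        have := hax1 C (C ∪ B) C' C' h2 (hrefl C')
        rwa [Set.union_right_comm] at this
      · intro B h1 h2 D hD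
        apply h B h1 _ D hD
        have := hax1 C C C' (C' ∪ B) (hrefl C) h2
        rwa [← Set.union_assoc] at this
    · rintro ⟨hC, hC'⟩ B h1 h2 D hD
      -- split B = B₁ ∪ B₂ with B₁ ≤ C and B₂ ≤ C'
      have hsplit : ∃ B₁ B₂ : Set X, B = B₁ ∪ B₂ ∧ lam C (C ∪ B₁) ∧ lam C' (C' ∪ B₂) := by
        rcases C.eq_empty_or_nonempty with rfl | hCne
        · refine ⟨∅, B, by simp, by simpa using hrefl (∅ : Set X), ?_⟩
          rwa [Set.empty_union] at h2
        rcases C'.eq_empty_or_nonempty with rfl | hC'ne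
        · refine ⟨B, ∅, by simp, ?_, by simpa using hrefl (∅ : Set X)⟩
          rwa [Set.union_empty] at h2
        have h2' : lam ((C ∪ C') ∪ B) (C ∪ C') := hsymm h2
        obtain ⟨G₁, G₂, -, -, hG, hg1, hg2⟩ := hax2 ((C ∪ C') ∪ B) C C' h2' hCne hC'ne
        refine ⟨B ∩ G₁, B ∩ G₂, ?_, ?_, ?_⟩
        · rw [← Set.inter_union_distrib_left]
          rw [← hG]
          exact (Set.inter_eq_self_of_subset_left Set.subset_union_right).symm
        · refine transfer G₁ C (B ∩ G₁) ?_ hg1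
          rw [Set.union_eq_self_of_subset_right Set.inter_subset_right]
          exact hrefl G₁
        · refine transfer G₂ C' (B ∩ G₂) ?_ hg2
          rw [Set.union_eq_self_of_subset_right Set.inter_subset_right]
          exact hrefl G₂
      obtain ⟨B₁, B₂, rfl, hb1, hb2⟩ := hsplit
      have hd1 : lam D (D ∪ B₁) :=
        hC B₁ (mono A B₁ (B₁ ∪ B₂) Set.subset_union_left h1) hb1 D hD
      have hd2 : lam D (D ∪ B₂) :=
        hC' B₂ (mono A B₂ (B₁ ∪ B₂) Set.subset_union_right h1) hb2 D hD
      have := hax1 D (D ∪ B₁) D (D ∪ B₂) hd1 hd2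
      rw [Set.union_self] at this
      have heq : (D ∪ B₁) ∪ (D ∪ B₂) = D ∪ (B₁ ∪ B₂) := by
        rw [Set.union_union_union_comm, Set.union_self]
      rwa [heq] at this
end

section
/- Pasting Lemma: Suppose X is a set with an orthogonality relation ⊥ and f : X → [a, b] is a function. If a < c < d < b, both restrictions f|_{f⁻¹[a,d]} : f⁻¹[a,d] → [a,d] and f|_{f⁻¹[c,b]} : f⁻¹[c,b] → [c,b] are ⊥-continuous (with respect to induced orthogonality on subsets and metric separation orthogonality on intervals), and f⁻¹[a,c] ⊥ f⁻¹[d,b], then f is ⊥-continuous. -/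
/-- Metric separation orthogonality on subsets of `ℝ`. -/
def metricSep (A C : Set ℝ) : Prop :=
  ∃ ε > (0 : ℝ), ∀ x ∈ A, ∀ y ∈ C, ε ≤ |x - y|

theorem stmt_15 {X : Type*} (perp : Set X → Set X → Prop)
    (hsymm : ∀ A B : Set X, perp A B → perp B A)
    (hzero : perp ∅ Set.univ)
    (hunion : ∀ A C C' : Set X, perp A (C ∪ C') ↔ (perp A C ∧ perp A C'))
    (f : X → ℝ) (a b c d : ℝ) (hac : a < c) (hcd : c < d) (hdb : d < b)
    (hrange : ∀ x : X, f x ∈ Set.Icc a b)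
    (hlow : ∀ A C : Set ℝ, A ⊆ Set.Icc a d → C ⊆ Set.Icc a d →
        metricSep A C → perp (f ⁻¹' A) (f ⁻¹' C))
    (hhigh : ∀ A C : Set ℝ, A ⊆ Set.Icc c b → C ⊆ Set.Icc c b →
        metricSep A C → perp (f ⁻¹' A) (f ⁻¹' C))
    (hmid : perp (f ⁻¹' Set.Icc a c) (f ⁻¹' Set.Icc d b)) :
    ∀ A C : Set ℝ, A ⊆ Set.Icc a b → C ⊆ Set.Icc a b →
      metricSep A C → perp (f ⁻¹' A) (f ⁻¹' C) := by
  -- monotonicity from hunion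
  have mono : ∀ P Q Q' : Set X, perp P Q → Q' ⊆ Q → perp P Q' := by
    intro P Q Q' h hsub
    have hEq : Q' ∪ Q = Q := Set.union_eq_self_of_subset_left hsub
    exact ((hunion P Q' Q).mp (by rwa [hEq])).1
  have mono' : ∀ P P' Q : Set X, perp P Q → P' ⊆ P → perp P' Q :=
    fun P P' Q h hs => hsymm _ _ (mono Q P P' (hsymm _ _ h) hs)
  intro A C hA hC hsep
  obtain ⟨ε, hε, hd⟩ := hsep
  -- pieces
  set A1 := A ∩ Set.Icc a c with hA1
  set A2 := A ∩ Set.Icc c d with hA2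
  set A3 := A ∩ Set.Icc d b with hA3
  set C1 := C ∩ Set.Icc a c with hC1
  set C2 := C ∩ Set.Icc c d with hC2
  set C3 := C ∩ Set.Icc d b with hC3
  have cover : ∀ S : Set ℝ, S ⊆ Set.Icc a b →
      S = (S ∩ Set.Icc a c) ∪ ((S ∩ Set.Icc c d) ∪ (S ∩ Set.Icc d b)) := by
    intro S hS
    apply Set.Subset.antisymm
    · intro x hx
      obtain ⟨h1, h2⟩ := hS hx
      rcases le_total x c with h | h
      · exact Or.inl ⟨hx, h1, h⟩
      · rcases le_total x d with h' | h'
        · exact Or.inr (Or.inl ⟨hx, h, h'⟩)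
        · exact Or.inr (Or.inr ⟨hx, h', h2⟩)
    · intro x hx
      rcases hx with h | h | h <;> exact h.1
  have sepsub : ∀ (P Q : Set ℝ), P ⊆ A → Q ⊆ C → metricSep P Q := by
    intro P Q hP hQ
    exact ⟨ε, hε, fun x hx y hy => hd x (hP hx) y (hQ hy)⟩
  -- subset facts
  have h1d : Set.Icc a c ⊆ Set.Icc a d := Set.Icc_subset_Icc le_rfl hcd.le
  have h2d : Set.Icc c d ⊆ Set.Icc a d := Set.Icc_subset_Icc hac.le le_rfl
  have h2b : Set.Icc c d ⊆ Set.Icc c b := Set.Icc_subset_Icc le_rfl hdb.le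
  have h3b : Set.Icc d b ⊆ Set.Icc c b := Set.Icc_subset_Icc hcd.le le_rfl
  have pA1 : A1 ⊆ Set.Icc a c := Set.inter_subset_right
  have pA2 : A2 ⊆ Set.Icc c d := Set.inter_subset_right
  have pA3 : A3 ⊆ Set.Icc d b := Set.inter_subset_right
  have pC1 : C1 ⊆ Set.Icc a c := Set.inter_subset_right
  have pC2 : C2 ⊆ Set.Icc c d := Set.inter_subset_right
  have pC3 : C3 ⊆ Set.Icc d b := Set.inter_subset_right
  have sA1 : A1 ⊆ A := Set.inter_subset_left
  have sA2 : A2 ⊆ A := Set.inter_subset_left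
  have sA3 : A3 ⊆ A := Set.inter_subset_left
  have sC1 : C1 ⊆ C := Set.inter_subset_left
  have sC2 : C2 ⊆ C := Set.inter_subset_left
  have sC3 : C3 ⊆ C := Set.inter_subset_left
  -- nine pairs
  have p11 : perp (f ⁻¹' A1) (f ⁻¹' C1) :=
    hlow _ _ (pA1.trans h1d) (pC1.trans h1d) (sepsub _ _ sA1 sC1)
  have p12 : perp (f ⁻¹' A1) (f ⁻¹' C2) :=
    hlow _ _ (pA1.trans h1d) (pC2.trans h2d) (sepsub _ _ sA1 sC2)
  have p21 : perp (f ⁻¹' A2) (f ⁻¹' C1) :=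
    hlow _ _ (pA2.trans h2d) (pC1.trans h1d) (sepsub _ _ sA2 sC1)
  have p22 : perp (f ⁻¹' A2) (f ⁻¹' C2) :=
    hlow _ _ (pA2.trans h2d) (pC2.trans h2d) (sepsub _ _ sA2 sC2)
  have p23 : perp (f ⁻¹' A2) (f ⁻¹' C3) :=
    hhigh _ _ (pA2.trans h2b) (pC3.trans h3b) (sepsub _ _ sA2 sC3)
  have p32 : perp (f ⁻¹' A3) (f ⁻¹' C2) :=
    hhigh _ _ (pA3.trans h3b) (pC2.trans h2b) (sepsub _ _ sA3 sC2)
  have p33 : perp (f ⁻¹' A3) (f ⁻¹' C3) :=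
    hhigh _ _ (pA3.trans h3b) (pC3.trans h3b) (sepsub _ _ sA3 sC3)
  have p13 : perp (f ⁻¹' A1) (f ⁻¹' C3) :=
    mono' _ _ _ (mono _ _ _ hmid (Set.preimage_mono pC3)) (Set.preimage_mono pA1)
  have p31 : perp (f ⁻¹' A3) (f ⁻¹' C1) :=
    hsymm _ _ (mono' _ _ _ (mono _ _ _ hmid (Set.preimage_mono pA3))
      (Set.preimage_mono pC1))
  -- combine
  have hAeq := cover A hA
  have hCeq := cover C hC
  rw [hAeq, hCeq, Set.preimage_union, Set.preimage_union, Set.preimage_union,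
    Set.preimage_union]
  rw [hunion]
  constructor
  · apply hsymm
    rw [hunion]
    exact ⟨hsymm _ _ p11, by rw [hunion]; exact ⟨hsymm _ _ p21, hsymm _ _ p31⟩⟩
  · rw [hunion]
    constructor
    · apply hsymm
      rw [hunion]
      exact ⟨hsymm _ _ p12, by rw [hunion]; exact ⟨hsymm _ _ p22, hsymm _ _ p32⟩⟩
    · apply hsymm
      rw [hunion]
      exact ⟨hsymm _ _ p13, by rw [hunion]; exact ⟨hsymm _ _ p23, hsymm _ _ p33⟩⟩
end

section
/- Let ⊥ be an orthogonality relation on X with bornology of ⊥-bounded sets. If f : X → ℂ ⊥-tends to 0 at infinity (i.e., for every ε > 0 the set {x : |f(x)| ≥ ε} is ⊥-bounded), then f is ⊥-continuous with respect to metric separation orthogonality on ℂ. -/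
/-!
Two metrically ε-separated sets cannot both meet the ball of radius ε/2 about 0, so one of them
lies in `{z | ε/2 ≤ ‖z‖}`. Its preimage under `f` is then ⊥-bounded, and a ⊥-bounded set is
orthogonal to every set.
-/

section Orthogonality

variable {X : Type*} {perp : Set X → Set X → Prop}

theorem perp_mono_right (hunion : ∀ A C C' : Set X, perp A (C ∪ C') ↔ (perp A C ∧ perp A C'))
    {A C C' : Set X} (h : perp A C') (hC : C ⊆ C') : perp A C := by
  rw [← Set.union_eq_self_of_subset_left hC] at h
  exact ((hunion A C C').1 h).1

theorem perp_of_subset_perp_univ (hsymm : ∀ A B : Set X, perp A B → perp B A)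
    (hunion : ∀ A C C' : Set X, perp A (C ∪ C') ↔ (perp A C ∧ perp A C'))
    {A B C : Set X} (hB : perp B Set.univ) (hA : A ⊆ B) : perp A C :=
  hsymm _ _ <| perp_mono_right hunion (hsymm _ _ <| perp_mono_right hunion hB C.subset_univ) hA

end Orthogonality

theorem half_le_norm_or_half_le_norm_of_separated {E : Type*} [SeminormedAddGroup E]
    {A D : Set E} {ε : ℝ} (hsep : ∀ a ∈ A, ∀ d ∈ D, ε ≤ ‖a - d‖) :
    (∀ a ∈ A, ε / 2 ≤ ‖a‖) ∨ (∀ d ∈ D, ε / 2 ≤ ‖d‖) := by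
  by_contra! h
  obtain ⟨⟨a, ha, ha_lt⟩, ⟨d, hd, hd_lt⟩⟩ := h
  linarith [hsep a ha d hd, norm_sub_le a d]

theorem stmt_16_general {X : Type*} (perp : Set X → Set X → Prop)
    (hsymm : ∀ A B : Set X, perp A B → perp B A)
    (hunion : ∀ A C C' : Set X, perp A (C ∪ C') ↔ (perp A C ∧ perp A C'))
    (f : X → ℂ)
    (htends : ∀ ε > (0 : ℝ), perp {x : X | ε ≤ ‖f x‖} Set.univ) :
    ∀ A D : Set ℂ, (∃ ε > (0 : ℝ), ∀ z₁ ∈ A, ∀ z₂ ∈ D, ε ≤ ‖z₁ - z₂‖) →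
      perp (f ⁻¹' A) (f ⁻¹' D) := by
  rintro A D ⟨ε, hε, hsep⟩
  have hbounded := htends (ε / 2) (half_pos hε)
  rcases half_le_norm_or_half_le_norm_of_separated hsep with hA | hD
  · exact perp_of_subset_perp_univ hsymm hunion hbounded fun x hx => hA _ hx
  · exact hsymm _ _ (perp_of_subset_perp_univ hsymm hunion hbounded fun x hx => hD _ hx)

theorem stmt_16 {X : Type*} (perp : Set X → Set X → Prop)
    (hsymm : ∀ A B : Set X, perp A B → perp B A)
    (hzero : perp ∅ Set.univ)
    (hunion : ∀ A C C' : Set X, perp A (C ∪ C') ↔ (perp A C ∧ perp A C'))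
    (f : X → ℂ)
    (htends : ∀ ε > (0 : ℝ), perp {x : X | ε ≤ ‖f x‖} Set.univ) :
    ∀ A D : Set ℂ, (∃ ε > (0 : ℝ), ∀ z₁ ∈ A, ∀ z₂ ∈ D, ε ≤ ‖z₁ - z₂‖) →
      perp (f ⁻¹' A) (f ⁻¹' D) :=
  stmt_16_general perp hsymm hunion f htends
end
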